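/- arXiv:2210.11185 — 11 statements merged into one kernel-verified Lean document; each statement's English description precedes it below -/
import Mathlib

section
/- Let a ≤ b be integers, let f : ℤ → ℤ be monotonically nondecreasing, and suppose the image f([a,b] ∩ ℤ) has at most n elements. Define the iteration t₀ = a and t_{k+1} = f(t_k). Then one of the following holds: (1) f(a) ≤ a; or (2) there exists k ≤ n such that a ≤ t_k ≤ b and f(t_k) = t_k, and moreover t_k is the smallest fixed point of f in [a,b]; or (3) there exists k ≤ n with t_k > b, and f has no fixed point in [a,b]. -/
/-!
Since `a < f a` and `f` is monotone, the orbit `t k = f^[k] a` is nondecreasing and stays below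
every fixed point `s ≥ a`, because `f^[k] a ≤ f^[k] s = s`. If the orbit leaves `[a, b]` within
`n` steps, there is therefore no fixed point in `[a, b]`. Otherwise `t 1, …, t (n + 1)` are
`n + 1` values of a nondecreasing sequence in `f '' [a, b]`, a set of at most `n` elements, so two
consecutive ones coincide: some `t k` with `1 ≤ k ≤ n` is fixed, and it is the least fixed point.
-/

theorem Monotone.exists_lt_eq_succ_of_ncard_le {α : Type*} [PartialOrder α] {u : ℕ → α}
    (hu : Monotone u) {s : Set α} (hs : s.Finite) {n : ℕ} (hcard : s.ncard ≤ n)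
    (hmem : ∀ k ≤ n, u k ∈ s) : ∃ k < n, u k = u (k + 1) := by
  by_contra! hne
  have hstrict : ∀ i j, i < j → j ≤ n → u i < u j := fun i j hij hjn =>
    (lt_of_le_of_ne (hu i.le_succ) (hne i (by omega))).trans_le (hu hij)
  have hinj : ∀ i < n + 1, ∀ j < n + 1, u i = u j → i = j := by
    intro i hi j hj hij
    by_contra hij'
    rcases Nat.lt_or_gt_of_ne hij' with h | h
    · exact (hstrict i j h (by omega)).ne hij
    · exact (hstrict j i h (by omega)).ne hij.symm
  have := Set.le_ncard_of_inj_on_range u (fun i hi => hmem i (by omega)) hinj hs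
  omega

theorem Monotone.iterate_le_of_isFixedPt {α : Type*} [Preorder α] {f : α → α} (hf : Monotone f)
    {a s : α} (has : a ≤ s) (hs : f s = s) (k : ℕ) : f^[k] a ≤ s :=
  (hf.iterate k has).trans_eq (Function.iterate_fixed hs k)

theorem stmt_0_general (a b : ℤ) (f : ℤ → ℤ) (hf : Monotone f)
    (n : ℕ) (hcard : (f '' Set.Icc a b).ncard ≤ n)
    (t : ℕ → ℤ) (ht0 : t 0 = a) (hts : ∀ k, t (k + 1) = f (t k)) :
    f a ≤ a ∨
    (∃ k ≤ n, a ≤ t k ∧ t k ≤ b ∧ f (t k) = t k ∧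
      ∀ s : ℤ, a ≤ s → s ≤ b → f s = s → t k ≤ s) ∨
    ((∃ k ≤ n, b < t k) ∧ ∀ s : ℤ, a ≤ s → s ≤ b → f s ≠ s) := by
  rcases le_or_gt (f a) a with hfa | hfa
  · exact Or.inl hfa
  have ht : ∀ k, t k = f^[k] a := by
    intro k
    induction k with
    | zero => exact ht0
    | succ k ih => rw [hts, ih, Function.iterate_succ_apply']
  have hmono : Monotone t := by
    simpa only [← ht] using hf.monotone_iterate_of_le_map hfa.le
  have hle_fix (s : ℤ) (has : a ≤ s) (hs : f s = s) (k : ℕ) : t k ≤ s :=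
    ht k ▸ hf.iterate_le_of_isFixedPt has hs k
  by_cases hexit : ∃ k ≤ n, b < t k
  · refine Or.inr (Or.inr ⟨hexit, fun s has hsb hs => ?_⟩)
    obtain ⟨k, -, hbk⟩ := hexit
    exact (hle_fix s has hs k).not_gt (hsb.trans_lt hbk)
  push Not at hexit
  have hlow (k : ℕ) : a ≤ t k := ht0 ▸ hmono k.zero_le
  have hmem (k : ℕ) (hk : k ≤ n) : t (k + 1) ∈ f '' Set.Icc a b :=
    hts k ▸ Set.mem_image_of_mem f ⟨hlow k, hexit k hk⟩
  obtain ⟨k, hkn, hk⟩ := (hmono.comp fun _ _ h => Nat.succ_le_succ h).exists_lt_eq_succ_of_ncard_le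
    ((Set.finite_Icc a b).image f) hcard hmem
  refine Or.inr (Or.inl ⟨k + 1, hkn, hlow _, hexit _ hkn, ?_, fun s has _ hs => hle_fix s has hs _⟩)
  exact (hts _).symm.trans hk.symm

/-- Fixed-point iteration for a monotone step function on an integer interval:
either `f a ≤ a`; or within `n` iterations we reach the least fixed point of `f`
in `[a, b]`; or within `n` iterations we exceed `b` and `f` has no fixed point
in `[a, b]`. -/
theorem stmt_0 (a b : ℤ) (hab : a ≤ b) (f : ℤ → ℤ) (hf : Monotone f)
    (n : ℕ) (hcard : (f '' Set.Icc a b).ncard ≤ n)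
    (t : ℕ → ℤ) (ht0 : t 0 = a) (hts : ∀ k, t (k + 1) = f (t k)) :
    f a ≤ a ∨
    (∃ k ≤ n, a ≤ t k ∧ t k ≤ b ∧ f (t k) = t k ∧
      ∀ s : ℤ, a ≤ s → s ≤ b → f s = s → t k ≤ s) ∨
    ((∃ k ≤ n, b < t k) ∧ ∀ s : ℤ, a ≤ s → s ≤ b → f s ≠ s) :=
  stmt_0_general a b f hf n hcard t ht0 hts
end

section
/- In the kernel setting, if the set K = {t ∈ [a,b] ∩ ℤ : φ(t) ≤ t} has a minimum t* and t* > a, then φ(t*) = t*, and t* is the smallest fixed point of φ in [a,b]: for every s ∈ [a,b] ∩ ℤ with φ(s) = s one has t* ≤ s. -/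
/-!
Each summand `t ↦ ⌈(t + α j) / T j⌉ * C j` is monotone, so `φ` is monotone. If `φ t* < t*`, then
`φ (t* - 1) ≤ φ t* ≤ t* - 1`, so `t* - 1 ∈ [a, b]` would be a smaller element of `K`. Every fixed
point in `[a, b]` lies in `K`, hence is at least `t*`.
-/

theorem monotone_sum_ceil_div_mul_add (s : Finset ℕ) (C T α : ℕ → ℤ) (β : ℤ)
    (hC : ∀ i ∈ s, 0 ≤ C i) (hT : ∀ i ∈ s, 0 ≤ T i) :
    Monotone fun t : ℤ => (∑ j ∈ s, ⌈((t : ℚ) + (α j : ℚ)) / (T j : ℚ)⌉ * C j) + β := by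
  intro t t' htt'
  dsimp only
  gcongr with i hi
  · exact hC i hi
  · exact_mod_cast hT i hi

theorem Int.map_eq_of_isLeast_map_le_of_monotone {f : ℤ → ℤ} (hf : Monotone f) {a b t₀ : ℤ}
    (hmin : IsLeast {t : ℤ | a ≤ t ∧ t ≤ b ∧ f t ≤ t} t₀) (hat₀ : a < t₀) : f t₀ = t₀ := by
  obtain ⟨⟨-, ht₀b, hle⟩, hlb⟩ := hmin
  by_contra hne
  have hpred : f (t₀ - 1) ≤ t₀ - 1 := by
    have := hf (show t₀ - 1 ≤ t₀ by omega)
    omega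
  have := hlb ⟨by omega, by omega, hpred⟩
  omega

theorem stmt_1_general (n : ℕ) (C T α : ℕ → ℤ) (β a b : ℤ)
    (hC : ∀ i ∈ Finset.Icc 1 n, 0 < C i)
    (hT : ∀ i ∈ Finset.Icc 1 n, 0 < T i)
    (φ : ℤ → ℤ)
    (hφ : ∀ t : ℤ, φ t = (∑ j ∈ Finset.Icc 1 n, ⌈((t : ℚ) + (α j : ℚ)) / (T j : ℚ)⌉ * C j) + β)
    (tstar : ℤ)
    (hmin : IsLeast {t : ℤ | a ≤ t ∧ t ≤ b ∧ φ t ≤ t} tstar)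
    (hgt : a < tstar) :
    φ tstar = tstar ∧ ∀ s : ℤ, a ≤ s → s ≤ b → φ s = s → tstar ≤ s := by
  have hmono : Monotone φ := by
    rw [show φ = _ from funext hφ]
    exact monotone_sum_ceil_div_mul_add _ C T α β (fun i hi => (hC i hi).le)
      (fun i hi => (hT i hi).le)
  exact ⟨Int.map_eq_of_isLeast_map_le_of_monotone hmono hmin hgt,
    fun s has hsb hfix => hmin.2 ⟨has, hsb, hfix.le⟩⟩

/-- Kernel setting: if the set `{t ∈ [a,b] ∩ ℤ : φ t ≤ t}` has a minimum `t*`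
with `t* > a`, then `φ t* = t*` and `t*` is the smallest fixed point of `φ`
in `[a, b]`. -/
theorem stmt_1 (n : ℕ) (C T α : ℕ → ℤ) (β a b : ℤ)
    (hC : ∀ i ∈ Finset.Icc 1 n, 0 < C i)
    (hT : ∀ i ∈ Finset.Icc 1 n, 0 < T i)
    (hU : ∑ j ∈ Finset.Icc 1 n, (C j : ℚ) / (T j : ℚ) ≤ 1)
    (φ : ℤ → ℤ)
    (hφ : ∀ t : ℤ, φ t = (∑ j ∈ Finset.Icc 1 n, ⌈((t : ℚ) + (α j : ℚ)) / (T j : ℚ)⌉ * C j) + β)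
    (tstar : ℤ)
    (hmin : IsLeast {t : ℤ | a ≤ t ∧ t ≤ b ∧ φ t ≤ t} tstar)
    (hgt : a < tstar) :
    φ tstar = tstar ∧ ∀ s : ℤ, a ≤ s → s ≤ b → φ s = s → tstar ≤ s :=
  stmt_1_general n C T α β a b hC hT φ hφ tstar hmin hgt
end

section
/- In the kernel setting, for integers a ≤ b, the number of distinct values taken by φ on [a,b] ∩ ℤ satisfies |{φ(t) : t ∈ ℤ, a ≤ t ≤ b}| ≤ 1 + Σ_{j∈[n]} ⌈(b−a)/T_j⌉. -/
/-! On `[a, b]` each summand `⌈(t + α j) / T j⌉` is a nondecreasing step function of `t` that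
rises by at most `⌈(b - a) / T j⌉`, and `φ t` depends only on the vector of these summands.
For `t ≤ u` that vector is the same at `t` and `u` as soon as its coordinate sum is, so the sum
alone determines `φ` on `[a, b]`; being monotone, the sum takes at most
`1 + Σ j, ⌈(b - a) / T j⌉` values there. -/

theorem Set.ncard_image_le_ncard_image_of_factorsThrough {α β γ : Type*} {s : Set α} (hs : s.Finite)
    {f : α → β} {g : α → γ} (h : ∀ x ∈ s, ∀ y ∈ s, f x = f y → g x = g y) :
    (g '' s).ncard ≤ (f '' s).ncard := by
  cases isEmpty_or_nonempty α
  · simp [Set.eq_empty_of_isEmpty s]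
  have hsub : g '' s ⊆ (g ∘ Function.invFunOn f s) '' (f '' s) := by
    rintro _ ⟨x, hx, rfl⟩
    have hfx : f x ∈ f '' s := ⟨x, hx, rfl⟩
    exact ⟨f x, hfx, h _ (Function.invFunOn_mem hfx) x hx (Function.invFunOn_eq hfx)⟩
  exact (Set.ncard_le_ncard hsub ((hs.image f).image _)).trans (Set.ncard_image_le (hs.image f))

theorem Int.ncard_Icc_of_le {a b : ℤ} (h : a ≤ b + 1) : ((Set.Icc a b).ncard : ℤ) = b + 1 - a := by
  rw [← Finset.coe_Icc, Set.ncard_coe_finset, Int.card_Icc_of_le _ _ h]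

theorem Int.ceil_sub_ceil_le {K : Type*} [Field K] [LinearOrder K] [IsStrictOrderedRing K]
    [FloorRing K] (x y : K) : ⌈x⌉ - ⌈y⌉ ≤ ⌈x - y⌉ := by
  have := Int.ceil_add_le (x - y) y
  rw [sub_add_cancel] at this
  omega

theorem ncard_image_Icc_le_one_add_sum_sub {ι γ : Type*} {s : Finset ι} {g : ι → ℤ → ℤ}
    (hg : ∀ j ∈ s, Monotone (g j)) {φ : ℤ → γ} (hφ : ∀ t u, (∀ j ∈ s, g j t = g j u) → φ t = φ u)
    {a b : ℤ} (hab : a ≤ b) :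
    ((φ '' Set.Icc a b).ncard : ℤ) ≤ 1 + ∑ j ∈ s, (g j b - g j a) := by
  set Ψ : ℤ → ℤ := fun t => ∑ j ∈ s, g j t
  have hΨ : Monotone Ψ := fun t u htu => Finset.sum_le_sum fun j hj => hg j hj htu
  have hfiber : ∀ t ∈ Set.Icc a b, ∀ u ∈ Set.Icc a b, Ψ t = Ψ u → φ t = φ u := by
    intro t ht u hu h
    wlog htu : t ≤ u generalizing t u
    · exact (this u hu t ht h.symm (le_of_not_ge htu)).symm
    exact hφ t u ((Finset.sum_eq_sum_iff_of_le fun j hj => hg j hj htu).1 h)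
  calc ((φ '' Set.Icc a b).ncard : ℤ) ≤ (Ψ '' Set.Icc a b).ncard := by
        exact_mod_cast Set.ncard_image_le_ncard_image_of_factorsThrough (Set.finite_Icc a b) hfiber
    _ ≤ (Set.Icc (Ψ a) (Ψ b)).ncard := by
        exact_mod_cast Set.ncard_le_ncard hΨ.image_Icc_subset (Set.finite_Icc _ _)
    _ = 1 + ∑ j ∈ s, (g j b - g j a) := by
        rw [Int.ncard_Icc_of_le (by linarith [hΨ hab]), Finset.sum_sub_distrib]
        ring

theorem stmt_2_general (n : ℕ) (C T α : ℕ → ℤ) (β a b : ℤ) (hab : a ≤ b)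
    (hT : ∀ i ∈ Finset.Icc 1 n, 0 < T i)
    (φ : ℤ → ℤ)
    (hφ : ∀ t : ℤ, φ t = (∑ j ∈ Finset.Icc 1 n, ⌈((t : ℚ) + (α j : ℚ)) / (T j : ℚ)⌉ * C j) + β) :
    ((φ '' Set.Icc a b).ncard : ℤ) ≤
      1 + ∑ j ∈ Finset.Icc 1 n, ⌈((b : ℚ) - (a : ℚ)) / (T j : ℚ)⌉ := by
  set g : ℕ → ℤ → ℤ := fun j t => ⌈((t : ℚ) + (α j : ℚ)) / (T j : ℚ)⌉
  have hg : ∀ j ∈ Finset.Icc 1 n, Monotone (g j) := by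
    intro j hj t u htu
    have hTj : (0 : ℚ) < T j := by exact_mod_cast hT j hj
    have htu' : (t : ℚ) ≤ u := by exact_mod_cast htu
    exact Int.ceil_le_ceil (by gcongr)
  have hφg : ∀ t u, (∀ j ∈ Finset.Icc 1 n, g j t = g j u) → φ t = φ u := by
    intro t u h
    rw [hφ t, hφ u, Finset.sum_congr rfl fun j hj => congrArg (· * C j) (h j hj)]
  refine (ncard_image_Icc_le_one_add_sum_sub hg hφg hab).trans ?_
  gcongr with j
  calc g j b - g j a ≤ ⌈((b : ℚ) + α j) / T j - ((a : ℚ) + α j) / T j⌉ := Int.ceil_sub_ceil_le _ _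
    _ = ⌈((b : ℚ) - a) / T j⌉ := by congr 1; ring

/-- Kernel setting: the number of distinct values taken by `φ` on `[a,b] ∩ ℤ`
is at most `1 + Σ_j ⌈(b−a)/T_j⌉`. -/
theorem stmt_2 (n : ℕ) (C T α : ℕ → ℤ) (β a b : ℤ) (hab : a ≤ b)
    (hC : ∀ i ∈ Finset.Icc 1 n, 0 < C i)
    (hT : ∀ i ∈ Finset.Icc 1 n, 0 < T i)
    (hU : ∑ j ∈ Finset.Icc 1 n, (C j : ℚ) / (T j : ℚ) ≤ 1)
    (φ : ℤ → ℤ)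
    (hφ : ∀ t : ℤ, φ t = (∑ j ∈ Finset.Icc 1 n, ⌈((t : ℚ) + (α j : ℚ)) / (T j : ℚ)⌉ * C j) + β) :
    ((φ '' Set.Icc a b).ncard : ℤ) ≤
      1 + ∑ j ∈ Finset.Icc 1 n, ⌈((b : ℚ) - (a : ℚ)) / (T j : ℚ)⌉ :=
  stmt_2_general n C T α β a b hab hT φ hφ
end

section
/- In the kernel setting, let S = {(t,x) ∈ ℤ × ℤⁿ : a ≤ t ≤ b, t − Σ_{j∈[n]} C_j·x_j ≥ β, T_i·x_i − t ≥ α_i for all i ∈ [n], and x_i ≥ ⌈(a+α_i)/T_i⌉ for all i ∈ [n]} (the feasible set of IP-KERN). Then: (1) for every integer t ∈ [a,b], φ(t) ≤ t holds if and only if there exists x ∈ ℤⁿ with (t,x) ∈ S; consequently (2) t* is the minimum of {t ∈ [a,b] ∩ ℤ : φ(t) ≤ t} if and only if there exists x* ∈ ℤⁿ such that (t*,x*) ∈ S and t* ≤ t for every (t,x) ∈ S. -/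
theorem Int.ceil_add_div_le_iff {T : ℤ} (hT : 0 < T) (t α x : ℤ) :
    ⌈((t : ℚ) + α) / T⌉ ≤ x ↔ α ≤ T * x - t := by
  rw [Int.ceil_le, div_le_iff₀ (by exact_mod_cast hT)]
  constructor <;> intro h
  · have : t + α ≤ x * T := by exact_mod_cast h
    linarith
  · exact_mod_cast (by linarith : t + α ≤ x * T)

section KernelProblem

variable {ι : Type*} {s : Finset ι} {C T α : ι → ℤ}

/-- The ceilings `⌈(t + α i) / T i⌉` are the least `x` meeting the constraints `T i * x i - t ≥ α i`;
for `t ≥ a` they also meet the lower bounds `x i ≥ ⌈(a + α i) / T i⌉`. -/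
theorem sum_ceil_mul_add_le_iff_exists (hC : ∀ i ∈ s, 0 ≤ C i) (hT : ∀ i ∈ s, 0 < T i)
    {a t : ℤ} (β : ℤ) (ha : a ≤ t) :
    ∑ i ∈ s, ⌈((t : ℚ) + α i) / T i⌉ * C i + β ≤ t ↔
      ∃ x : ι → ℤ, t - ∑ i ∈ s, C i * x i ≥ β ∧ (∀ i ∈ s, T i * x i - t ≥ α i) ∧
        ∀ i ∈ s, x i ≥ ⌈((a : ℚ) + α i) / T i⌉ := by
  constructor
  · intro h
    refine ⟨fun i => ⌈((t : ℚ) + α i) / T i⌉, ?_, ?_, ?_⟩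
    · simp only [mul_comm (C _)]
      linarith
    · intro i hi
      exact (Int.ceil_add_div_le_iff (hT i hi) t (α i) _).mp le_rfl
    · intro i hi
      have : (0 : ℚ) < T i := by exact_mod_cast hT i hi
      have : (a : ℚ) ≤ t := by exact_mod_cast ha
      dsimp only
      gcongr
  · rintro ⟨x, hβ, hx, -⟩
    have hsum : ∑ i ∈ s, ⌈((t : ℚ) + α i) / T i⌉ * C i ≤ ∑ i ∈ s, C i * x i := by
      refine Finset.sum_le_sum fun i hi => ?_
      rw [mul_comm (C i)]
      exact mul_le_mul_of_nonneg_right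
        ((Int.ceil_add_div_le_iff (hT i hi) t (α i) (x i)).mpr (hx i hi)) (hC i hi)
    linarith

end KernelProblem

theorem isLeast_setOf_iff_exists_mem {τ χ : Type*} [Preorder τ] {P : τ → Prop}
    {S : Set (τ × χ)} (hPS : ∀ t, P t ↔ ∃ x, (t, x) ∈ S) (t₀ : τ) :
    IsLeast {t | P t} t₀ ↔ ∃ x₀, (t₀, x₀) ∈ S ∧ ∀ p ∈ S, t₀ ≤ p.1 := by
  constructor
  · rintro ⟨ht₀, hlb⟩
    obtain ⟨x₀, hx₀⟩ := (hPS t₀).mp ht₀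
    exact ⟨x₀, hx₀, fun p hp => hlb ((hPS p.1).mpr ⟨p.2, hp⟩)⟩
  · rintro ⟨x₀, hx₀, hlb⟩
    refine ⟨(hPS t₀).mpr ⟨x₀, hx₀⟩, fun t ht => ?_⟩
    obtain ⟨x, hx⟩ := (hPS t).mp ht
    exact hlb (t, x) hx

theorem stmt_3_general (n : ℕ) (C T α : ℕ → ℤ) (β a b : ℤ)
    (hC : ∀ i ∈ Finset.Icc 1 n, 0 < C i)
    (hT : ∀ i ∈ Finset.Icc 1 n, 0 < T i)
    (φ : ℤ → ℤ)
    (hφ : ∀ t : ℤ, φ t = (∑ j ∈ Finset.Icc 1 n, ⌈((t : ℚ) + (α j : ℚ)) / (T j : ℚ)⌉ * C j) + β)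
    (S : Set (ℤ × (ℕ → ℤ)))
    (hS : S = {p : ℤ × (ℕ → ℤ) | a ≤ p.1 ∧ p.1 ≤ b ∧
      p.1 - ∑ j ∈ Finset.Icc 1 n, C j * p.2 j ≥ β ∧
      (∀ i ∈ Finset.Icc 1 n, T i * p.2 i - p.1 ≥ α i) ∧
      (∀ i ∈ Finset.Icc 1 n, p.2 i ≥ ⌈((a : ℚ) + (α i : ℚ)) / (T i : ℚ)⌉)}) :
    (∀ t : ℤ, a ≤ t → t ≤ b → (φ t ≤ t ↔ ∃ x : ℕ → ℤ, (t, x) ∈ S)) ∧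
    (∀ tstar : ℤ,
      IsLeast {t : ℤ | a ≤ t ∧ t ≤ b ∧ φ t ≤ t} tstar ↔
      ∃ xstar : ℕ → ℤ, (tstar, xstar) ∈ S ∧ ∀ p ∈ S, tstar ≤ p.1) := by
  have feasible_iff (t : ℤ) (ha : a ≤ t) (hb : t ≤ b) :
      φ t ≤ t ↔ ∃ x : ℕ → ℤ, (t, x) ∈ S := by
    rw [hφ, sum_ceil_mul_add_le_iff_exists (fun i hi => (hC i hi).le) hT β ha, hS]
    simp only [Set.mem_ofPred_eq, ha, hb, true_and]
  refine ⟨feasible_iff, isLeast_setOf_iff_exists_mem fun t => ?_⟩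
  constructor
  · rintro ⟨ha, hb, hφt⟩
    exact (feasible_iff t ha hb).mp hφt
  · rintro ⟨x, hx⟩
    obtain ⟨ha, hb, -⟩ : a ≤ t ∧ t ≤ b ∧ _ := hS ▸ hx
    exact ⟨ha, hb, (feasible_iff t ha hb).mpr ⟨x, hx⟩⟩

/-- Kernel setting: `S` is the feasible set of IP-KERN. (1) For `t ∈ [a,b] ∩ ℤ`,
`φ t ≤ t` iff some `x` makes `(t, x)` feasible; (2) `t*` minimizes the kernel
problem iff some `(t*, x*)` is feasible for IP-KERN and `t*` is a lower bound
on all feasible `t`. -/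
theorem stmt_3 (n : ℕ) (C T α : ℕ → ℤ) (β a b : ℤ)
    (hC : ∀ i ∈ Finset.Icc 1 n, 0 < C i)
    (hT : ∀ i ∈ Finset.Icc 1 n, 0 < T i)
    (hU : ∑ j ∈ Finset.Icc 1 n, (C j : ℚ) / (T j : ℚ) ≤ 1)
    (φ : ℤ → ℤ)
    (hφ : ∀ t : ℤ, φ t = (∑ j ∈ Finset.Icc 1 n, ⌈((t : ℚ) + (α j : ℚ)) / (T j : ℚ)⌉ * C j) + β)
    (S : Set (ℤ × (ℕ → ℤ)))
    (hS : S = {p : ℤ × (ℕ → ℤ) | a ≤ p.1 ∧ p.1 ≤ b ∧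
      p.1 - ∑ j ∈ Finset.Icc 1 n, C j * p.2 j ≥ β ∧
      (∀ i ∈ Finset.Icc 1 n, T i * p.2 i - p.1 ≥ α i) ∧
      (∀ i ∈ Finset.Icc 1 n, p.2 i ≥ ⌈((a : ℚ) + (α i : ℚ)) / (T i : ℚ)⌉)}) :
    (∀ t : ℤ, a ≤ t → t ≤ b → (φ t ≤ t ↔ ∃ x : ℕ → ℤ, (t, x) ∈ S)) ∧
    (∀ tstar : ℤ,
      IsLeast {t : ℤ | a ≤ t ∧ t ≤ b ∧ φ t ≤ t} tstar ↔
      ∃ xstar : ℕ → ℤ, (tstar, xstar) ∈ S ∧ ∀ p ∈ S, tstar ≤ p.1) :=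
  stmt_3_general n C T α β a b hC hT φ hφ S hS
end

section
/- In the kernel setting, if Σ_{j∈[n]} U_j = 1 and β + Σ_{j∈[n]} U_j·α_j > 0, then there is no pair (t,x) ∈ ℝ × ℝⁿ satisfying both t − Σ_{j∈[n]} C_j·x_j ≥ β and T_i·x_i − t ≥ α_i for all i ∈ [n]; in particular, the integer program IP-KERN is infeasible. -/
/-!
Divide the `i`-th constraint `T_i x_i - t ≥ α_i` by `T_i`, multiply by `C_i ≥ 0` and sum: since
`Σ C_j / T_j = 1` this gives `Σ C_j x_j ≥ t + Σ (C_j / T_j) α_j`, while the first constraint says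
`t - Σ C_j x_j ≥ β`. Adding the two yields `β + Σ (C_j / T_j) α_j ≤ 0`. An integer solution of
IP-KERN is in particular a real one.
-/

section Kernel

variable {ι K : Type*} [Field K] [LinearOrder K] [IsStrictOrderedRing K]

lemma div_mul_add_le_mul {c T t α x : K} (hc : 0 ≤ c) (hT : 0 < T) (h : α ≤ T * x - t) :
    c / T * (t + α) ≤ c * x :=
  calc c / T * (t + α) ≤ c / T * (T * x) := by gcongr; linarith
    _ = c * x := by field_simp

lemma add_sum_div_mul_le_sum_mul (s : Finset ι) {C T α x : ι → K} {t : K}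
    (hC : ∀ i ∈ s, 0 ≤ C i) (hT : ∀ i ∈ s, 0 < T i) (hU : ∑ j ∈ s, C j / T j = 1)
    (hx : ∀ i ∈ s, α i ≤ T i * x i - t) :
    t + ∑ j ∈ s, C j / T j * α j ≤ ∑ j ∈ s, C j * x j :=
  calc t + ∑ j ∈ s, C j / T j * α j = ∑ j ∈ s, C j / T j * (t + α j) := by
        simp only [mul_add, Finset.sum_add_distrib, ← Finset.sum_mul, hU, one_mul]
    _ ≤ ∑ j ∈ s, C j * x j :=
        Finset.sum_le_sum fun i hi => div_mul_add_le_mul (hC i hi) (hT i hi) (hx i hi)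

theorem not_exists_kernel_solution (s : Finset ι) {C T α : ι → K} {β : K}
    (hC : ∀ i ∈ s, 0 ≤ C i) (hT : ∀ i ∈ s, 0 < T i) (hU : ∑ j ∈ s, C j / T j = 1)
    (hpos : 0 < β + ∑ j ∈ s, C j / T j * α j) :
    ¬ ∃ (t : K) (x : ι → K), β ≤ t - ∑ j ∈ s, C j * x j ∧ ∀ i ∈ s, α i ≤ T i * x i - t := by
  rintro ⟨t, x, hβ, hx⟩
  linarith [add_sum_div_mul_le_sum_mul s hC hT hU hx]

end Kernel

/-- Kernel setting: if `Σ U_j = 1` and `β + Σ U_j α_j > 0`, then no real pair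
`(t, x)` satisfies `t − Σ C_j x_j ≥ β` and `T_i x_i − t ≥ α_i` for all `i`;
in particular IP-KERN is infeasible. -/
theorem stmt_8 (n : ℕ) (C T α : ℕ → ℤ) (β a b : ℤ)
    (hC : ∀ i ∈ Finset.Icc 1 n, 0 < C i)
    (hT : ∀ i ∈ Finset.Icc 1 n, 0 < T i)
    (hU1 : ∑ j ∈ Finset.Icc 1 n, (C j : ℚ) / (T j : ℚ) = 1)
    (hpos : (β : ℚ) + ∑ j ∈ Finset.Icc 1 n, (C j : ℚ) / (T j : ℚ) * (α j : ℚ) > 0) :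
    (¬ ∃ (t : ℝ) (x : ℕ → ℝ),
      t - ∑ j ∈ Finset.Icc 1 n, (C j : ℝ) * x j ≥ (β : ℝ) ∧
      ∀ i ∈ Finset.Icc 1 n, (T i : ℝ) * x i - t ≥ (α i : ℝ)) ∧
    (¬ ∃ (t : ℤ) (x : ℕ → ℤ), a ≤ t ∧ t ≤ b ∧
      t - ∑ j ∈ Finset.Icc 1 n, C j * x j ≥ β ∧
      (∀ i ∈ Finset.Icc 1 n, T i * x i - t ≥ α i) ∧
      (∀ i ∈ Finset.Icc 1 n, x i ≥ ⌈((a : ℚ) + (α i : ℚ)) / (T i : ℚ)⌉)) := by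
  have hU : ∑ j ∈ Finset.Icc 1 n, (C j : ℝ) / (T j : ℝ) = 1 := by
    simpa using congrArg ((↑) : ℚ → ℝ) hU1
  have hpos' : 0 < (β : ℝ) + ∑ j ∈ Finset.Icc 1 n, (C j : ℝ) / (T j : ℝ) * (α j : ℝ) := by
    exact_mod_cast hpos
  have hreal := not_exists_kernel_solution (Finset.Icc 1 n)
    (fun i hi => (Int.cast_pos.2 (hC i hi)).le) (fun i hi => Int.cast_pos.2 (hT i hi)) hU hpos'
  refine ⟨hreal, ?_⟩
  rintro ⟨t, x, -, -, hβ, hx, -⟩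
  refine hreal ⟨t, fun i => x i, ?_, fun i hi => ?_⟩
  · beta_reduce; exact_mod_cast hβ
  · beta_reduce; exact_mod_cast hx i hi
end

section
/- In the kernel setting with ux ∈ ℤⁿ, let k ∈ [n] be such that f(k−1) is well-defined, i.e., q_{k−1} := 1 − Σ_{j∈[n]∖[k−1]} U_j > 0, and set q_k := 1 − Σ_{j∈[n]∖[k]} U_j. Then (f(k) − f(k−1))/U_k = (T_k·ux_k − α_k − f(k))/q_{k−1} = (T_k·ux_k − α_k − f(k−1))/q_k, and consequently sgn(f(k) − f(k−1)) = sgn(T_k·ux_k − α_k − f(k)) = sgn(T_k·ux_k − α_k − f(k−1)). -/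
/-!
Write `f m = N m / q m`. Passing from `k - 1` to `k` moves the index `k` from the tail sums to the
prefix sum, so `q k = q (k-1) + U_k` and `N k - N (k-1) = C_k ux_k - U_k α_k = U_k (T_k ux_k - α_k)`.
Hence `f k q k - f (k-1) q (k-1) = U_k d` with `d = T_k ux_k - α_k`, and eliminating either `q k`
or `q (k-1)` gives `(f k - f (k-1)) q (k-1) = U_k (d - f k)` and `(f k - f (k-1)) q k = U_k (d - f (k-1))`.
Since `U_k`, `q (k-1)` and `q k` are positive, both identities also compare signs.
-/

open Finset

section Increment

variable {K : Type*} [Field K]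

theorem mul_sub_eq_of_mul_sub_mul_eq {f₀ f₁ q₀ q₁ u d : K} (hq : q₁ = q₀ + u)
    (h : f₁ * q₁ - f₀ * q₀ = u * d) :
    (f₁ - f₀) * q₀ = u * (d - f₁) ∧ (f₁ - f₀) * q₁ = u * (d - f₀) := by
  subst hq
  constructor <;> linear_combination h

theorem sub_div_eq_of_mul_sub_mul_eq {f₀ f₁ q₀ q₁ u d : K} (hu : u ≠ 0) (hq₀ : q₀ ≠ 0)
    (hq₁ : q₁ ≠ 0) (hq : q₁ = q₀ + u) (h : f₁ * q₁ - f₀ * q₀ = u * d) :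
    (f₁ - f₀) / u = (d - f₁) / q₀ ∧ (f₁ - f₀) / u = (d - f₀) / q₁ := by
  obtain ⟨h₀, h₁⟩ := mul_sub_eq_of_mul_sub_mul_eq hq h
  exact ⟨(div_eq_div_iff hu hq₀).2 (by rw [h₀, mul_comm]),
    (div_eq_div_iff hu hq₁).2 (by rw [h₁, mul_comm])⟩

end Increment

section Sign

variable {K : Type*} [Field K] [LinearOrder K] [IsStrictOrderedRing K]

theorem sign_eq_sign_of_mul_eq_mul {x y p r : K} (hp : 0 < p) (hr : 0 < r) (h : x * p = r * y) :
    SignType.sign x = SignType.sign y := by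
  have := congrArg SignType.sign h
  rwa [sign_mul, sign_mul, sign_pos hp, sign_pos hr, mul_one, one_mul] at this

theorem sign_sub_eq_of_mul_sub_mul_eq {f₀ f₁ q₀ q₁ u d : K} (hu : 0 < u) (hq₀ : 0 < q₀)
    (hq₁ : 0 < q₁) (hq : q₁ = q₀ + u) (h : f₁ * q₁ - f₀ * q₀ = u * d) :
    SignType.sign (f₁ - f₀) = SignType.sign (d - f₁) ∧
      SignType.sign (f₁ - f₀) = SignType.sign (d - f₀) := by
  obtain ⟨h₀, h₁⟩ := mul_sub_eq_of_mul_sub_mul_eq hq h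
  exact ⟨sign_eq_sign_of_mul_eq_mul hq₀ hu h₀, sign_eq_sign_of_mul_eq_mul hq₁ hu h₁⟩

end Sign

theorem Finset.sum_Icc_eq_add_sum_Icc_succ {M : Type*} [AddCommMonoid M] {k n : ℕ} (h : k ≤ n)
    (g : ℕ → M) : ∑ j ∈ Icc k n, g j = g k + ∑ j ∈ Icc (k + 1) n, g j := by
  rw [Icc_add_one_left_eq_Ioc, add_sum_Ioc_eq_sum_Icc h]

theorem Finset.sum_Icc_one_eq_sum_Icc_pred_add {M : Type*} [AddCommMonoid M] {k : ℕ} (h : 1 ≤ k)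
    (g : ℕ → M) : ∑ j ∈ Icc 1 k, g j = ∑ j ∈ Icc 1 (k - 1), g j + g k := by
  obtain ⟨k, rfl⟩ := Nat.exists_eq_add_of_le' h
  rw [sum_Icc_succ_top (by omega), Nat.add_sub_cancel]

theorem numerator_sub_numerator_pred (C T α ux : ℕ → ℤ) (β : ℤ) (n : ℕ) {k : ℕ} (hk1 : 1 ≤ k) (hkn : k ≤ n) (hTk : (T k : ℚ) ≠ 0) :
    ((β : ℚ) + ∑ j ∈ Icc (k + 1) n, (C j : ℚ) / T j * α j + ∑ j ∈ Icc 1 k, (C j : ℚ) * ux j) -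
      ((β : ℚ) + ∑ j ∈ Icc k n, (C j : ℚ) / T j * α j + ∑ j ∈ Icc 1 (k - 1), (C j : ℚ) * ux j) =
      (C k : ℚ) / T k * (T k * ux k - α k) := by
  rw [sum_Icc_eq_add_sum_Icc_succ hkn, sum_Icc_one_eq_sum_Icc_pred_add hk1]
  field_simp
  ring

theorem stmt_9_general (n : ℕ) (C T α ux : ℕ → ℤ) (β : ℤ)
    (hC : ∀ i ∈ Finset.Icc 1 n, 0 < C i)
    (hT : ∀ i ∈ Finset.Icc 1 n, 0 < T i)
    (f : ℕ → ℚ)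
    (hf : ∀ m : ℕ, f m =
      ((β : ℚ) + ∑ j ∈ Finset.Icc (m + 1) n, (C j : ℚ) / (T j : ℚ) * (α j : ℚ) +
        ∑ j ∈ Finset.Icc 1 m, (C j : ℚ) * (ux j : ℚ)) /
      (1 - ∑ j ∈ Finset.Icc (m + 1) n, (C j : ℚ) / (T j : ℚ)))
    (k : ℕ) (hk1 : 1 ≤ k) (hkn : k ≤ n)
    (hq : 0 < 1 - ∑ j ∈ Finset.Icc k n, (C j : ℚ) / (T j : ℚ)) :
    ((f k - f (k - 1)) / ((C k : ℚ) / (T k : ℚ)) =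
        ((T k : ℚ) * (ux k : ℚ) - (α k : ℚ) - f k) /
          (1 - ∑ j ∈ Finset.Icc k n, (C j : ℚ) / (T j : ℚ)) ∧
      (f k - f (k - 1)) / ((C k : ℚ) / (T k : ℚ)) =
        ((T k : ℚ) * (ux k : ℚ) - (α k : ℚ) - f (k - 1)) /
          (1 - ∑ j ∈ Finset.Icc (k + 1) n, (C j : ℚ) / (T j : ℚ))) ∧
    (SignType.sign (f k - f (k - 1)) =
        SignType.sign ((T k : ℚ) * (ux k : ℚ) - (α k : ℚ) - f k) ∧
      SignType.sign (f k - f (k - 1)) =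
        SignType.sign ((T k : ℚ) * (ux k : ℚ) - (α k : ℚ) - f (k - 1))) := by
  have hk : k ∈ Icc 1 n := mem_Icc.2 ⟨hk1, hkn⟩
  have hTk : (0 : ℚ) < T k := by exact_mod_cast hT k hk
  have hUk : (0 : ℚ) < C k / T k := div_pos (by exact_mod_cast hC k hk) hTk
  have hq_succ : 1 - ∑ j ∈ Icc (k + 1) n, (C j : ℚ) / T j =
      (1 - ∑ j ∈ Icc k n, (C j : ℚ) / T j) + C k / T k := by
    rw [sum_Icc_eq_add_sum_Icc_succ hkn]; ring
  have hq₁ : 0 < 1 - ∑ j ∈ Icc (k + 1) n, (C j : ℚ) / T j := by linarith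
  have hfk := hf k
  have hfk₀ := hf (k - 1)
  rw [Nat.sub_add_cancel hk1] at hfk₀
  rw [eq_div_iff hq₁.ne'] at hfk
  rw [eq_div_iff hq.ne'] at hfk₀
  have hstep : f k * (1 - ∑ j ∈ Icc (k + 1) n, (C j : ℚ) / T j) -
      f (k - 1) * (1 - ∑ j ∈ Icc k n, (C j : ℚ) / T j) = C k / T k * (T k * ux k - α k) := by
    rw [hfk, hfk₀, numerator_sub_numerator_pred C T α ux β n hk1 hkn hTk.ne']
  exact ⟨sub_div_eq_of_mul_sub_mul_eq hUk.ne' hq.ne' hq₁.ne' hq_succ hstep,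
    sign_sub_eq_of_mul_sub_mul_eq hUk hq hq₁ hq_succ hstep⟩

/-- Kernel setting: identities relating `f(k) − f(k−1)`, `T_k·ux_k − α_k − f(k)`
and `T_k·ux_k − α_k − f(k−1)`, together with the resulting sign equalities. -/
theorem stmt_9 (n : ℕ) (C T α ux : ℕ → ℤ) (β : ℤ)
    (hC : ∀ i ∈ Finset.Icc 1 n, 0 < C i)
    (hT : ∀ i ∈ Finset.Icc 1 n, 0 < T i)
    (hU : ∑ j ∈ Finset.Icc 1 n, (C j : ℚ) / (T j : ℚ) ≤ 1)
    (f : ℕ → ℚ)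
    (hf : ∀ m : ℕ, f m =
      ((β : ℚ) + ∑ j ∈ Finset.Icc (m + 1) n, (C j : ℚ) / (T j : ℚ) * (α j : ℚ) +
        ∑ j ∈ Finset.Icc 1 m, (C j : ℚ) * (ux j : ℚ)) /
      (1 - ∑ j ∈ Finset.Icc (m + 1) n, (C j : ℚ) / (T j : ℚ)))
    (k : ℕ) (hk1 : 1 ≤ k) (hkn : k ≤ n)
    (hq : 0 < 1 - ∑ j ∈ Finset.Icc k n, (C j : ℚ) / (T j : ℚ)) :
    ((f k - f (k - 1)) / ((C k : ℚ) / (T k : ℚ)) =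
        ((T k : ℚ) * (ux k : ℚ) - (α k : ℚ) - f k) /
          (1 - ∑ j ∈ Finset.Icc k n, (C j : ℚ) / (T j : ℚ)) ∧
      (f k - f (k - 1)) / ((C k : ℚ) / (T k : ℚ)) =
        ((T k : ℚ) * (ux k : ℚ) - (α k : ℚ) - f (k - 1)) /
          (1 - ∑ j ∈ Finset.Icc (k + 1) n, (C j : ℚ) / (T j : ℚ))) ∧
    (SignType.sign (f k - f (k - 1)) =
        SignType.sign ((T k : ℚ) * (ux k : ℚ) - (α k : ℚ) - f k) ∧
      SignType.sign (f k - f (k - 1)) =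
        SignType.sign ((T k : ℚ) * (ux k : ℚ) - (α k : ℚ) - f (k - 1))) :=
  stmt_9_general n C T α ux β hC hT f hf k hk1 hkn hq
end

section
/- In the kernel setting with ux ∈ ℤⁿ, assume the sortedness condition T_1·ux_1 − α_1 ≥ T_2·ux_2 − α_2 ≥ … ≥ T_n·ux_n − α_n, and let D ⊆ {0,1,…,n} be the set of indices at which f is well-defined (D is either {0,…,n} or {1,…,n}). Call i ∈ D a local maximum point of f if f(i) ≥ f(i−1) whenever i−1 ∈ D and f(i) ≥ f(i+1) whenever i+1 ∈ D. If i₁ ≤ i₂ are two local maximum points of f in D, then f(i) = f(i₁) for every i ∈ D with i₁ < i ≤ i₂; in particular, every local maximum point of f is a global maximum point of f over D. -/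
/-!
Write `a_k = 1 - ∑_{j > k} U_j` and `W_j = T_j ux_j - α_j`. Then `a_{k+1} = a_k + U_{k+1}` and
`a_{k+1} f(k+1) = a_k f(k) + U_{k+1} W_{k+1}`, so `f(k+1)` is a strict weighted mean of `f(k)` and
`W_{k+1}`: `f` goes down at step `k + 1` exactly when `W_{k+1}` lies below `f(k + 1)`, and goes up
exactly when `W_{k+1}` lies above `f(k)`. Since `W` is nonincreasing, a descent is followed only by
descents and an ascent is preceded only by ascents, so `f` increases on `D` up to any local maximum
and decreases after it.
-/

open Finset

section WeightedMean

variable {K : Type*} [CommRing K] [LinearOrder K] [IsStrictOrderedRing K] {a u x y w : K}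

theorem left_le_weightedMean_iff (ha : 0 < a) (hu : 0 < u)
    (hy : (a + u) * y = a * x + u * w) : x ≤ y ↔ x ≤ w := by
  constructor <;> intro h <;> nlinarith

theorem left_le_weightedMean_iff_le_right (ha : 0 < a) (hu : 0 < u)
    (hy : (a + u) * y = a * x + u * w) : x ≤ y ↔ y ≤ w := by
  constructor <;> intro h <;> nlinarith

theorem weightedMean_le_left_iff (ha : 0 < a) (hu : 0 < u)
    (hy : (a + u) * y = a * x + u * w) : y ≤ x ↔ w ≤ x := by
  constructor <;> intro h <;> nlinarith

theorem weightedMean_le_left_iff_right_le (ha : 0 < a) (hu : 0 < u)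
    (hy : (a + u) * y = a * x + u * w) : y ≤ x ↔ w ≤ y := by
  constructor <;> intro h <;> nlinarith

end WeightedMean

def IsDiscreteLocalMax {K : Type*} [LE K] (f : ℕ → K) (D : Set ℕ) (i : ℕ) : Prop :=
  i ∈ D ∧ (1 ≤ i → i - 1 ∈ D → f (i - 1) ≤ f i) ∧ (i + 1 ∈ D → f (i + 1) ≤ f i)

structure IsRunningMean {K : Type*} [CommRing K] [LinearOrder K]
    (f W : ℕ → K) (D : Set ℕ) (n : ℕ) : Prop where
  le_of_mem : ∀ k ∈ D, k ≤ n
  succ_mem : ∀ k ∈ D, k < n → k + 1 ∈ D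
  weightedMean : ∀ k ∈ D, k < n →
    ∃ a u, 0 < a ∧ 0 < u ∧ (a + u) * f (k + 1) = a * f k + u * W (k + 1)
  antitoneOn : AntitoneOn W (Set.Icc 1 n)

namespace IsRunningMean

variable {K : Type*} [CommRing K] [LinearOrder K] {f W : ℕ → K} {D : Set ℕ} {n i k : ℕ}

theorem mem_of_le (h : IsRunningMean f W D n) (hk : k ∈ D) {m : ℕ} (hkm : k ≤ m) (hm : m ≤ n) :
    m ∈ D := by
  induction m, hkm using Nat.le_induction with
  | base => exact hk
  | succ m _ ih => exact h.succ_mem m (ih (by omega)) (by omega)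

theorem ordConnected (h : IsRunningMean f W D n) : D.OrdConnected :=
  ⟨fun _ hx _ hy _ hz => h.mem_of_le hx hz.1 (hz.2.trans (h.le_of_mem _ hy))⟩

variable [IsStrictOrderedRing K]

theorem succ_succ_le_of_succ_le (h : IsRunningMean f W D n) (hk : k ∈ D) (hkn : k + 2 ≤ n)
    (hdesc : f (k + 1) ≤ f k) : f (k + 2) ≤ f (k + 1) := by
  obtain ⟨a, u, ha, hu, hmean⟩ := h.weightedMean k hk (by omega)
  obtain ⟨a', u', ha', hu', hmean'⟩ := h.weightedMean (k + 1) (h.succ_mem k hk (by omega)) hkn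
  have hW : W (k + 2) ≤ W (k + 1) :=
    h.antitoneOn ⟨by omega, by omega⟩ ⟨by omega, hkn⟩ (by omega)
  exact (weightedMean_le_left_iff ha' hu' hmean').2
    (hW.trans ((weightedMean_le_left_iff_right_le ha hu hmean).1 hdesc))

theorem le_succ_of_succ_le_succ_succ (h : IsRunningMean f W D n) (hk : k ∈ D) (hkn : k + 2 ≤ n)
    (hasc : f (k + 1) ≤ f (k + 2)) : f k ≤ f (k + 1) := by
  obtain ⟨a, u, ha, hu, hmean⟩ := h.weightedMean k hk (by omega)
  obtain ⟨a', u', ha', hu', hmean'⟩ := h.weightedMean (k + 1) (h.succ_mem k hk (by omega)) hkn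
  have hW : W (k + 2) ≤ W (k + 1) :=
    h.antitoneOn ⟨by omega, by omega⟩ ⟨by omega, hkn⟩ (by omega)
  exact (left_le_weightedMean_iff_le_right ha hu hmean).2
    (((left_le_weightedMean_iff ha' hu' hmean').1 hasc).trans hW)

theorem succ_le_of_isDiscreteLocalMax (h : IsRunningMean f W D n) (hi : IsDiscreteLocalMax f D i)
    (hik : i ≤ k) (hkn : k < n) : f (k + 1) ≤ f k := by
  induction k, hik using Nat.le_induction with
  | base => exact hi.2.2 (h.succ_mem i hi.1 hkn)
  | succ k hik ih =>
    exact h.succ_succ_le_of_succ_le (h.mem_of_le hi.1 hik (by omega)) hkn (ih (by omega))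

theorem le_succ_of_isDiscreteLocalMax (h : IsRunningMean f W D n) (hi : IsDiscreteLocalMax f D i)
    (hk : k ∈ D) (hki : k < i) : f k ≤ f (k + 1) := by
  obtain ⟨d, rfl⟩ := Nat.exists_eq_add_of_lt hki
  clear hki
  induction d generalizing k with
  | zero => simpa using hi.2.1 (by omega) (by simpa using hk)
  | succ d ih =>
    have hin := h.le_of_mem _ hi.1
    exact h.le_succ_of_succ_le_succ_succ hk (by omega)
      (ih (h.succ_mem k hk (by omega)) (by rwa [show k + 1 + d + 1 = k + (d + 1) + 1 by omega]))

theorem antitoneOn_Icc (h : IsRunningMean f W D n) (hi : IsDiscreteLocalMax f D i) :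
    AntitoneOn f (Set.Icc i n) :=
  antitoneOn_of_succ_le Set.ordConnected_Icc fun k _ hk hk1 => by
    rw [Order.succ_eq_add_one] at hk1 ⊢
    exact h.succ_le_of_isDiscreteLocalMax hi hk.1 hk1.2

theorem monotoneOn_inter_Iic (h : IsRunningMean f W D n) (hi : IsDiscreteLocalMax f D i) :
    MonotoneOn f (D ∩ Set.Iic i) :=
  monotoneOn_of_le_succ (h.ordConnected.inter Set.ordConnected_Iic) fun k _ hk hk1 => by
    rw [Order.succ_eq_add_one] at hk1 ⊢
    exact h.le_succ_of_isDiscreteLocalMax hi hk.1 hk1.2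

theorem le_of_isDiscreteLocalMax (h : IsRunningMean f W D n) (hi : IsDiscreteLocalMax f D i)
    {j : ℕ} (hj : j ∈ D) : f j ≤ f i := by
  rcases le_total j i with hji | hij
  · exact h.monotoneOn_inter_Iic hi ⟨hj, hji⟩ ⟨hi.1, Set.mem_Iic.2 le_rfl⟩ hji
  · exact h.antitoneOn_Icc hi ⟨le_rfl, h.le_of_mem i hi.1⟩ ⟨hij, h.le_of_mem j hj⟩ hij

theorem eq_of_isDiscreteLocalMax (h : IsRunningMean f W D n) {i₁ i₂ : ℕ}
    (h₁ : IsDiscreteLocalMax f D i₁) (h₂ : IsDiscreteLocalMax f D i₂) {j : ℕ} (hj : j ∈ D)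
    (h₁j : i₁ < j) (hj₂ : j ≤ i₂) : f j = f i₁ :=
  (h.le_of_isDiscreteLocalMax h₁ hj).antisymm
    (h.monotoneOn_inter_Iic h₂ ⟨h₁.1, Set.mem_Iic.2 (by omega)⟩ ⟨hj, hj₂⟩ h₁j.le)

end IsRunningMean

theorem sum_Icc_succ_eq_add_sum_Icc {M : Type*} [AddCommMonoid M] (g : ℕ → M) {k n : ℕ}
    (hk : k < n) : ∑ j ∈ Icc (k + 1) n, g j = g (k + 1) + ∑ j ∈ Icc (k + 2) n, g j := by
  rw [← add_sum_Ioc_eq_sum_Icc hk, ← Icc_add_one_left_eq_Ioc]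
  rfl

def utilizationTail (C T : ℕ → ℤ) (n k : ℕ) : ℚ := ∑ j ∈ Icc (k + 1) n, (C j : ℚ) / (T j : ℚ)

theorem utilizationTail_eq_add {C T : ℕ → ℤ} {n k : ℕ} (hk : k < n) :
    utilizationTail C T n k = C (k + 1) / T (k + 1) + utilizationTail C T n (k + 1) :=
  sum_Icc_succ_eq_add_sum_Icc _ hk

theorem kernel_weightedMean_succ {n k : ℕ} {C T α ux : ℕ → ℤ} {β : ℤ} {f : ℕ → ℚ}
    (hf : ∀ m : ℕ, f m =
      ((β : ℚ) + ∑ j ∈ Icc (m + 1) n, (C j : ℚ) / (T j : ℚ) * (α j : ℚ) +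
        ∑ j ∈ Icc 1 m, (C j : ℚ) * (ux j : ℚ)) / (1 - utilizationTail C T n m))
    (hk : k < n) (hT : T (k + 1) ≠ 0) (h₀ : 1 - utilizationTail C T n k ≠ 0)
    (h₁ : 1 - utilizationTail C T n (k + 1) ≠ 0) :
    (1 - utilizationTail C T n k + C (k + 1) / T (k + 1)) * f (k + 1) =
      (1 - utilizationTail C T n k) * f k +
        C (k + 1) / T (k + 1) * ((T (k + 1) * ux (k + 1) - α (k + 1) : ℤ) : ℚ) := by
  have hsum : 1 - utilizationTail C T n k + C (k + 1) / T (k + 1) =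
      1 - utilizationTail C T n (k + 1) := by
    rw [utilizationTail_eq_add hk]; ring
  rw [hsum, hf k, hf (k + 1), mul_div_cancel₀ _ h₀, mul_div_cancel₀ _ h₁,
    sum_Icc_succ_eq_add_sum_Icc _ hk, sum_Icc_succ_top (by omega : 1 ≤ k + 1)]
  push_cast
  field_simp
  ring

theorem isRunningMean_of_kernel {n : ℕ} {C T α ux : ℕ → ℤ} {β : ℤ} {f : ℕ → ℚ} {D : Set ℕ}
    (hC : ∀ i ∈ Icc 1 n, 0 < C i) (hT : ∀ i ∈ Icc 1 n, 0 < T i)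
    (hsorted : ∀ i j : ℕ, 1 ≤ i → i ≤ j → j ≤ n → T j * ux j - α j ≤ T i * ux i - α i)
    (hf : ∀ m : ℕ, f m =
      ((β : ℚ) + ∑ j ∈ Icc (m + 1) n, (C j : ℚ) / (T j : ℚ) * (α j : ℚ) +
        ∑ j ∈ Icc 1 m, (C j : ℚ) * (ux j : ℚ)) / (1 - utilizationTail C T n m))
    (hD : D = {k : ℕ | k ≤ n ∧ 0 < 1 - utilizationTail C T n k}) :
    IsRunningMean f (fun j => ((T j * ux j - α j : ℤ) : ℚ)) D n := by
  subst hD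
  have hU : ∀ k < n, 0 < (C (k + 1) : ℚ) / T (k + 1) := fun k hk => by
    have hCk := hC (k + 1) (mem_Icc.2 ⟨by omega, hk⟩)
    have hTk := hT (k + 1) (mem_Icc.2 ⟨by omega, hk⟩)
    positivity
  have hsucc : ∀ k ∈ {k : ℕ | k ≤ n ∧ 0 < 1 - utilizationTail C T n k}, k < n →
      k + 1 ∈ {k : ℕ | k ≤ n ∧ 0 < 1 - utilizationTail C T n k} := by
    rintro k ⟨-, hk⟩ hkn
    refine ⟨hkn, ?_⟩
    linarith [utilizationTail_eq_add (C := C) (T := T) hkn, hU k hkn]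
  refine ⟨fun k hk => hk.1, hsucc, fun k hk hkn => ?_, ?_⟩
  · have hTk := (hT (k + 1) (mem_Icc.2 ⟨by omega, hkn⟩)).ne'
    exact ⟨_, _, hk.2, hU k hkn,
      kernel_weightedMean_succ hf hkn hTk hk.2.ne' (hsucc k hk hkn).2.ne'⟩
  · exact fun i hi j hj hij => Int.cast_le.2 (hsorted i j hi.1 hij hj.2)

theorem stmt_11_general (n : ℕ) (C T α ux : ℕ → ℤ) (β : ℤ)
    (hC : ∀ i ∈ Finset.Icc 1 n, 0 < C i)
    (hT : ∀ i ∈ Finset.Icc 1 n, 0 < T i)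
    (sorted : ∀ i j : ℕ, 1 ≤ i → i ≤ j → j ≤ n →
      T j * ux j - α j ≤ T i * ux i - α i)
    (f : ℕ → ℚ)
    (hf : ∀ m : ℕ, f m =
      ((β : ℚ) + ∑ j ∈ Finset.Icc (m + 1) n, (C j : ℚ) / (T j : ℚ) * (α j : ℚ) +
        ∑ j ∈ Finset.Icc 1 m, (C j : ℚ) * (ux j : ℚ)) /
      (1 - ∑ j ∈ Finset.Icc (m + 1) n, (C j : ℚ) / (T j : ℚ)))
    (D : Set ℕ)
    (hD : D = {k : ℕ | k ≤ n ∧ 0 < 1 - ∑ j ∈ Finset.Icc (k + 1) n, (C j : ℚ) / (T j : ℚ)})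
    (isLocMax : ℕ → Prop)
    (hLM : ∀ i : ℕ, isLocMax i ↔ i ∈ D ∧
      (1 ≤ i → i - 1 ∈ D → f (i - 1) ≤ f i) ∧ (i + 1 ∈ D → f (i + 1) ≤ f i))
    (i₁ i₂ : ℕ) (h1 : isLocMax i₁) (h2 : isLocMax i₂) :
    (∀ i ∈ D, i₁ < i → i ≤ i₂ → f i = f i₁) ∧
    (∀ i : ℕ, isLocMax i → ∀ j ∈ D, f j ≤ f i) := by
  have hmean := isRunningMean_of_kernel hC hT sorted hf hD
  have hmax : ∀ i, isLocMax i → IsDiscreteLocalMax f D i := fun i => (hLM i).1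
  exact ⟨fun i hi h₁i hi₂ => hmean.eq_of_isDiscreteLocalMax (hmax _ h1) (hmax _ h2) hi h₁i hi₂,
    fun i hi _ hj => hmean.le_of_isDiscreteLocalMax (hmax i hi) hj⟩

/-- Kernel setting, sorted so that `T_j·ux_j − α_j` is nonincreasing, with `D`
the set of indices where `f` is well-defined: between two local maximum points
`i₁ ≤ i₂` of `f` the function is constant (`f i = f i₁` for `i₁ < i ≤ i₂` in
`D`); in particular every local maximum point of `f` is a global maximum point
of `f` over `D`. -/
theorem stmt_11 (n : ℕ) (C T α ux : ℕ → ℤ) (β : ℤ)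
    (hC : ∀ i ∈ Finset.Icc 1 n, 0 < C i)
    (hT : ∀ i ∈ Finset.Icc 1 n, 0 < T i)
    (hU : ∑ j ∈ Finset.Icc 1 n, (C j : ℚ) / (T j : ℚ) ≤ 1)
    (sorted : ∀ i j : ℕ, 1 ≤ i → i ≤ j → j ≤ n →
      T j * ux j - α j ≤ T i * ux i - α i)
    (f : ℕ → ℚ)
    (hf : ∀ m : ℕ, f m =
      ((β : ℚ) + ∑ j ∈ Finset.Icc (m + 1) n, (C j : ℚ) / (T j : ℚ) * (α j : ℚ) +
        ∑ j ∈ Finset.Icc 1 m, (C j : ℚ) * (ux j : ℚ)) /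
      (1 - ∑ j ∈ Finset.Icc (m + 1) n, (C j : ℚ) / (T j : ℚ)))
    (D : Set ℕ)
    (hD : D = {k : ℕ | k ≤ n ∧ 0 < 1 - ∑ j ∈ Finset.Icc (k + 1) n, (C j : ℚ) / (T j : ℚ)})
    (isLocMax : ℕ → Prop)
    (hLM : ∀ i : ℕ, isLocMax i ↔ i ∈ D ∧
      (1 ≤ i → i - 1 ∈ D → f (i - 1) ≤ f i) ∧ (i + 1 ∈ D → f (i + 1) ≤ f i))
    (i₁ i₂ : ℕ) (h12 : i₁ ≤ i₂) (h1 : isLocMax i₁) (h2 : isLocMax i₂) :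
    (∀ i ∈ D, i₁ < i → i ≤ i₂ → f i = f i₁) ∧
    (∀ i : ℕ, isLocMax i → ∀ j ∈ D, f j ≤ f i) :=
  stmt_11_general n C T α ux β hC hT sorted f hf D hD isLocMax hLM i₁ i₂ h1 h2
end

section
/- In the kernel setting with n ≥ 1 and ux ∈ ℤⁿ, assume the sortedness condition T_1·ux_1 − α_1 ≥ T_2·ux_2 − α_2 ≥ … ≥ T_n·ux_n − α_n, and assume it is not the case that both Σ_{j∈[n]} U_j = 1 and β + Σ_{j∈[n]} U_j·α_j > 0. Then the feasible set LP-relax(ux) = {(t,x) ∈ ℝ × ℝⁿ : t − Σ_{j∈[n]} C_j·x_j ≥ β, T_i·x_i − t ≥ α_i for all i ∈ [n], x_i ≥ ux_i for all i ∈ [n]} is nonempty, the infimum of t over LP-relax(ux) is attained, and this minimum equals max{f(k) : k ∈ {0,…,n} such that f(k) is well-defined}. -/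
/-!
Write `tailUtil k = Σ_{j>k} U_j`, `b_j = T_j·ux_j − α_j` and `value k = num k / (1 − tailUtil k)`
for `f(k)`. Adding the budget constraint to `C_j·(x_j ≥ ux_j)` for `j ≤ k` and to
`U_j·(T_j x_j − t ≥ α_j)` for `j > k` gives `(1 − tailUtil k)·t ≥ num k`, so every well-defined
`f(k)` bounds `t` from below on LP-relax(ux).

From `k` to `k + 1` the denominator grows by `U_{k+1}` and the numerator by `U_{k+1}·b_{k+1}`, so
`f(k+1)` is a mediant of `f(k)` and `b_{k+1}`. At a maximiser `k` of `f` this forces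
`b_{k+1} ≤ f(k) ≤ b_k`; by sortedness the point `t = f(k)`, `x_j = max(ux_j, (t + α_j)/T_j)` then
has `x_j = ux_j` for `j ≤ k` and `T_j x_j = t + α_j` for `j > k`, so it meets the budget
constraint with equality. If `f(k − 1)` is undefined then `k = 1` and `Σ U_j = 1`, and
`β + Σ U_j α_j ≤ 0` takes the place of the comparison with `f(0)`.
-/

open Finset

theorem sum_Icc_add_one_consecutive {M : Type*} [AddCommMonoid M] (g : ℕ → M) {a b c : ℕ}
    (hab : a ≤ b) (hbc : b ≤ c) :
    ∑ j ∈ Icc (a + 1) b, g j + ∑ j ∈ Icc (b + 1) c, g j = ∑ j ∈ Icc (a + 1) c, g j := by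
  simp only [Icc_add_one_left_eq_Ioc]
  exact sum_Ioc_consecutive g hab hbc

namespace KernelLP

variable {K : Type*} [Field K] (n : ℕ) (C T α ux : ℕ → K) (β : K)

def tailUtil (k : ℕ) : K := ∑ j ∈ Icc (k + 1) n, C j / T j

def num (k : ℕ) : K :=
  β + ∑ j ∈ Icc (k + 1) n, C j / T j * α j + ∑ j ∈ Icc 1 k, C j * ux j

def value (k : ℕ) : K := num n C T α ux β k / (1 - tailUtil n C T k)

variable {n C T α ux β}

theorem tailUtil_self : tailUtil n C T n = 0 := by
  simp [tailUtil]

theorem tailUtil_eq_add {m : ℕ} (hm : m < n) :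
    tailUtil n C T m = C (m + 1) / T (m + 1) + tailUtil n C T (m + 1) := by
  rw [tailUtil, tailUtil, ← sum_Icc_add_one_consecutive _ m.le_succ hm, Icc_self,
    sum_singleton]

theorem num_succ {m : ℕ} (hm : m < n) (hT : T (m + 1) ≠ 0) :
    num n C T α ux β (m + 1) =
      num n C T α ux β m + C (m + 1) / T (m + 1) * (T (m + 1) * ux (m + 1) - α (m + 1)) := by
  rw [num, num, ← sum_Icc_add_one_consecutive _ m.le_succ hm, Icc_self, sum_singleton,
    sum_Icc_succ_top (by omega)]
  field_simp
  ring

theorem sub_mul_value {k : ℕ} (hk : tailUtil n C T k ≠ 1) :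
    (1 - tailUtil n C T k) * value n C T α ux β k = num n C T α ux β k :=
  mul_div_cancel₀ _ (sub_ne_zero.2 hk.symm)

variable [LinearOrder K] [IsStrictOrderedRing K]

variable (n C T α ux β) in
def relax : Set (K × (ℕ → K)) :=
  {p | p.1 - ∑ j ∈ Icc 1 n, C j * p.2 j ≥ β ∧
    (∀ i ∈ Icc 1 n, T i * p.2 i - p.1 ≥ α i) ∧
    (∀ i ∈ Icc 1 n, p.2 i ≥ ux i)}

variable (T α ux) in
def candidate (t : K) (j : ℕ) : K := max (ux j) ((t + α j) / T j)

theorem tailUtil_lt_tailUtil_zero (hCT : ∀ i ∈ Icc 1 n, 0 < C i / T i) {m : ℕ}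
    (h1m : 1 ≤ m) (hmn : m ≤ n) : tailUtil n C T m < tailUtil n C T 0 := by
  have hpos : 0 < ∑ j ∈ Icc 1 m, C j / T j :=
    sum_pos (fun j hj => hCT j (Icc_subset_Icc_right hmn hj)) (nonempty_Icc.2 h1m)
  rw [tailUtil, tailUtil, ← sum_Icc_add_one_consecutive _ m.zero_le hmn]
  linarith

theorem num_le_sub_mul_of_mem_relax (hC : ∀ i ∈ Icc 1 n, 0 ≤ C i)
    (hT : ∀ i ∈ Icc 1 n, 0 < T i) {q : K × (ℕ → K)} (hq : q ∈ relax n C T α ux β)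
    {m : ℕ} (hm : m ≤ n) : num n C T α ux β m ≤ (1 - tailUtil n C T m) * q.1 := by
  obtain ⟨hbudget, hdeadline, hlower⟩ := hq
  have hhead : ∑ j ∈ Icc 1 m, C j * ux j ≤ ∑ j ∈ Icc 1 m, C j * q.2 j :=
    sum_le_sum fun j hj =>
      have hj' := Icc_subset_Icc_right hm hj
      mul_le_mul_of_nonneg_left (hlower j hj') (hC j hj')
  have htail : ∑ j ∈ Icc (m + 1) n, (C j / T j * q.1 + C j / T j * α j)
      ≤ ∑ j ∈ Icc (m + 1) n, C j * q.2 j := by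
    refine sum_le_sum fun j hj => ?_
    have hj' : j ∈ Icc 1 n := Icc_subset_Icc_left (by omega) hj
    have hTj := hT j hj'
    calc C j / T j * q.1 + C j / T j * α j = C j / T j * (q.1 + α j) := by ring
      _ ≤ C j / T j * (T j * q.2 j) := by
        gcongr
        · exact div_nonneg (hC j hj') hTj.le
        · linarith [hdeadline j hj']
      _ = C j * q.2 j := by field_simp
  have hsplit := sum_Icc_add_one_consecutive (fun j => C j * q.2 j) m.zero_le hm
  rw [zero_add] at hsplit
  rw [sum_add_distrib, ← sum_mul] at htail
  rw [num, tailUtil]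
  linarith

theorem value_le_of_mem_relax (hC : ∀ i ∈ Icc 1 n, 0 ≤ C i)
    (hT : ∀ i ∈ Icc 1 n, 0 < T i) {q : K × (ℕ → K)} (hq : q ∈ relax n C T α ux β)
    {m : ℕ} (hm : m ≤ n) (hDm : tailUtil n C T m < 1) : value n C T α ux β m ≤ q.1 :=
  (div_le_iff₀' (sub_pos.2 hDm)).2 (num_le_sub_mul_of_mem_relax hC hT hq hm)

theorem candidate_mem_relax (hT : ∀ i ∈ Icc 1 n, 0 < T i) {t : K}
    (hbudget : t - ∑ j ∈ Icc 1 n, C j * candidate T α ux t j ≥ β) :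
    (t, candidate T α ux t) ∈ relax n C T α ux β := by
  refine ⟨hbudget, fun i hi => ?_, fun i _ => le_max_left _ _⟩
  have := (div_le_iff₀' (hT i hi)).1 (le_max_right (ux i) ((t + α i) / T i))
  simp only [candidate, ge_iff_le]
  linarith

theorem sum_mul_candidate (hT : ∀ i ∈ Icc 1 n, 0 < T i) {k : ℕ} (hk : k ≤ n) {t : K}
    (hhead : ∀ j ∈ Icc 1 k, t ≤ T j * ux j - α j)
    (htail : ∀ j ∈ Icc (k + 1) n, T j * ux j - α j ≤ t) :
    ∑ j ∈ Icc 1 n, C j * candidate T α ux t j =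
      tailUtil n C T k * t + (num n C T α ux β k - β) := by
  have hhead' : ∀ j ∈ Icc 1 k, C j * candidate T α ux t j = C j * ux j := by
    intro j hj
    have hTj := hT j (Icc_subset_Icc_right hk hj)
    rw [candidate, max_eq_left ((div_le_iff₀ hTj).2 (by linarith [hhead j hj]))]
  have htail' : ∀ j ∈ Icc (k + 1) n,
      C j * candidate T α ux t j = C j / T j * t + C j / T j * α j := by
    intro j hj
    have hTj := hT j (Icc_subset_Icc_left (by omega) hj)
    rw [candidate, max_eq_right ((le_div_iff₀ hTj).2 (by linarith [htail j hj]))]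
    field_simp
  rw [← sum_Icc_add_one_consecutive _ k.zero_le hk, zero_add, sum_congr rfl hhead',
    sum_congr rfl htail', sum_add_distrib, ← sum_mul, num, tailUtil]
  ring

theorem value_mem_relax (hT : ∀ i ∈ Icc 1 n, 0 < T i) {k : ℕ} (hk : k ≤ n)
    (hDk : tailUtil n C T k ≠ 1)
    (hhead : ∀ j ∈ Icc 1 k, value n C T α ux β k ≤ T j * ux j - α j)
    (htail : ∀ j ∈ Icc (k + 1) n, T j * ux j - α j ≤ value n C T α ux β k) :
    (value n C T α ux β k, candidate T α ux (value n C T α ux β k)) ∈ relax n C T α ux β := by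
  refine candidate_mem_relax hT (ge_of_eq ?_)
  rw [sum_mul_candidate (β := β) hT hk hhead htail]
  linear_combination sub_mul_value (α := α) (ux := ux) (β := β) hDk

theorem threshold_succ_le_value {k : ℕ} (hk : k < n) (hCT : 0 < C (k + 1) / T (k + 1))
    (hT : T (k + 1) ≠ 0) (hDk : tailUtil n C T k < 1)
    (hle : value n C T α ux β (k + 1) ≤ value n C T α ux β k) :
    T (k + 1) * ux (k + 1) - α (k + 1) ≤ value n C T α ux β k := by
  have hS := tailUtil_eq_add (C := C) (T := T) hk
  have hDsucc : tailUtil n C T (k + 1) < 1 := by linarith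
  have hmul := mul_le_mul_of_nonneg_left hle (sub_nonneg.2 hDsucc.le)
  have hstep : C (k + 1) / T (k + 1) * (T (k + 1) * ux (k + 1) - α (k + 1))
      ≤ C (k + 1) / T (k + 1) * value n C T α ux β k := by
    rw [sub_mul_value hDsucc.ne, num_succ hk hT, ← sub_mul_value hDk.ne] at hmul
    linear_combination hmul + value n C T α ux β k * hS
  exact le_of_mul_le_mul_left hstep hCT

theorem value_succ_le_threshold {k : ℕ} (hk : k < n) (hCT : 0 < C (k + 1) / T (k + 1))
    (hT : T (k + 1) ≠ 0) (hDsucc : tailUtil n C T (k + 1) < 1)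
    (hle : num n C T α ux β k ≤ (1 - tailUtil n C T k) * value n C T α ux β (k + 1)) :
    value n C T α ux β (k + 1) ≤ T (k + 1) * ux (k + 1) - α (k + 1) := by
  have hS := tailUtil_eq_add (C := C) (T := T) hk
  have hv := sub_mul_value (α := α) (ux := ux) (β := β) hDsucc.ne
  rw [num_succ hk hT] at hv
  refine le_of_mul_le_mul_left ?_ hCT
  linear_combination hle + hv - value n C T α ux β (k + 1) * hS

theorem exists_value_bracket (hCT : ∀ i ∈ Icc 1 n, 0 < C i / T i)
    (hT : ∀ i ∈ Icc 1 n, T i ≠ 0) (hU : tailUtil n C T 0 ≤ 1)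
    (hnot : ¬ (tailUtil n C T 0 = 1 ∧ 0 < num n C T α ux β 0))
    (sorted : ∀ i j : ℕ, 1 ≤ i → i ≤ j → j ≤ n → T j * ux j - α j ≤ T i * ux i - α i) :
    ∃ k ≤ n, tailUtil n C T k < 1 ∧
      (∀ j ∈ Icc 1 k, value n C T α ux β k ≤ T j * ux j - α j) ∧
      ∀ j ∈ Icc (k + 1) n, T j * ux j - α j ≤ value n C T α ux β k := by
  classical
  obtain ⟨k, hkW, hmax⟩ := exists_max_image
    ((range (n + 1)).filter fun m => tailUtil n C T m < 1) (value n C T α ux β)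
    ⟨n, by simp [tailUtil_self]⟩
  simp only [mem_filter, mem_range] at hkW hmax
  obtain ⟨hkn, hDk⟩ := hkW
  refine ⟨k, by omega, hDk, fun j hj => ?_, fun j hj => ?_⟩
  · obtain ⟨hj1, hjk⟩ := mem_Icc.1 hj
    obtain ⟨m, rfl⟩ : ∃ m, k = m + 1 := ⟨k - 1, by omega⟩
    have hm1 : m + 1 ∈ Icc 1 n := mem_Icc.2 ⟨by omega, by omega⟩
    refine (value_succ_le_threshold (by omega) (hCT _ hm1) (hT _ hm1) hDk ?_).trans
      (sorted j (m + 1) hj1 hjk (by omega))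
    by_cases hDm : tailUtil n C T m < 1
    · rw [← sub_mul_value hDm.ne]
      exact mul_le_mul_of_nonneg_left (hmax m ⟨by omega, hDm⟩) (sub_nonneg.2 hDm.le)
    · obtain rfl : m = 0 := by
        by_contra hm
        linarith [tailUtil_lt_tailUtil_zero hCT (m := m) (by omega) (by omega)]
      have hS0 : tailUtil n C T 0 = 1 := le_antisymm hU (not_lt.1 hDm)
      rw [hS0, sub_self, zero_mul]
      exact not_lt.1 fun h => hnot ⟨hS0, h⟩
  · obtain ⟨hkj, hjn⟩ := mem_Icc.1 hj
    have hk1 : k + 1 ∈ Icc 1 n := mem_Icc.2 ⟨by omega, by omega⟩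
    have hDk' : tailUtil n C T (k + 1) < 1 := by
      linarith [tailUtil_eq_add (C := C) (T := T) (by omega : k < n), hCT _ hk1]
    exact (sorted (k + 1) j (by omega) hkj hjn).trans
      (threshold_succ_le_value (by omega) (hCT _ hk1) (hT _ hk1) hDk (hmax _ ⟨by omega, hDk'⟩))

end KernelLP

open KernelLP in
theorem stmt_12_general (n : ℕ) (C T α ux : ℕ → ℤ) (β : ℤ)
    (hC : ∀ i ∈ Finset.Icc 1 n, 0 < C i)
    (hT : ∀ i ∈ Finset.Icc 1 n, 0 < T i)
    (hU : ∑ j ∈ Finset.Icc 1 n, (C j : ℚ) / (T j : ℚ) ≤ 1)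
    (sorted : ∀ i j : ℕ, 1 ≤ i → i ≤ j → j ≤ n →
      T j * ux j - α j ≤ T i * ux i - α i)
    (hnot : ¬ ((∑ j ∈ Finset.Icc 1 n, (C j : ℚ) / (T j : ℚ)) = 1 ∧
      (β : ℚ) + ∑ j ∈ Finset.Icc 1 n, (C j : ℚ) / (T j : ℚ) * (α j : ℚ) > 0))
    (f : ℕ → ℚ)
    (hf : ∀ m : ℕ, f m =
      ((β : ℚ) + ∑ j ∈ Finset.Icc (m + 1) n, (C j : ℚ) / (T j : ℚ) * (α j : ℚ) +
        ∑ j ∈ Finset.Icc 1 m, (C j : ℚ) * (ux j : ℚ)) /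
      (1 - ∑ j ∈ Finset.Icc (m + 1) n, (C j : ℚ) / (T j : ℚ)))
    (LP : Set (ℝ × (ℕ → ℝ)))
    (hLP : LP = {p : ℝ × (ℕ → ℝ) |
      p.1 - ∑ j ∈ Finset.Icc 1 n, (C j : ℝ) * p.2 j ≥ (β : ℝ) ∧
      (∀ i ∈ Finset.Icc 1 n, (T i : ℝ) * p.2 i - p.1 ≥ (α i : ℝ)) ∧
      (∀ i ∈ Finset.Icc 1 n, p.2 i ≥ (ux i : ℝ))}) :
    ∃ p ∈ LP, (∀ q ∈ LP, p.1 ≤ q.1) ∧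
      ∃ k : ℕ, k ≤ n ∧
        0 < 1 - ∑ j ∈ Finset.Icc (k + 1) n, (C j : ℚ) / (T j : ℚ) ∧
        p.1 = (f k : ℝ) ∧
        ∀ m : ℕ, m ≤ n →
          0 < 1 - ∑ j ∈ Finset.Icc (m + 1) n, (C j : ℚ) / (T j : ℚ) →
          f m ≤ f k := by
  subst hLP
  set Cr : ℕ → ℝ := fun j => C j
  set Tr : ℕ → ℝ := fun j => T j
  set αr : ℕ → ℝ := fun j => α j
  set uxr : ℕ → ℝ := fun j => ux j
  have hS (m : ℕ) : ((∑ j ∈ Icc (m + 1) n, (C j : ℚ) / (T j : ℚ) : ℚ) : ℝ) =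
      tailUtil n Cr Tr m := by
    simp [tailUtil, Cr, Tr]
  have hf_cast (m : ℕ) : (f m : ℝ) = value n Cr Tr αr uxr β m := by
    simp [hf, value, num, tailUtil, Cr, Tr, αr, uxr]
  have hnum : (((β : ℚ) + ∑ j ∈ Icc 1 n, (C j : ℚ) / (T j : ℚ) * (α j : ℚ) : ℚ) : ℝ) =
      num n Cr Tr αr uxr β 0 := by
    simp [num, Cr, Tr, αr]
  have hCr : ∀ i ∈ Icc 1 n, 0 < Cr i := fun i hi => Int.cast_pos.2 (hC i hi)
  have hTr : ∀ i ∈ Icc 1 n, 0 < Tr i := fun i hi => Int.cast_pos.2 (hT i hi)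
  have hlower : ∀ q ∈ relax n Cr Tr αr uxr β, ∀ m ≤ n, tailUtil n Cr Tr m < 1 →
      value n Cr Tr αr uxr β m ≤ q.1 := fun q hq m hm =>
    value_le_of_mem_relax (fun i hi => (hCr i hi).le) hTr hq hm
  obtain ⟨k, hkn, hDk, hhead, htail⟩ := exists_value_bracket (α := αr) (ux := uxr) (β := β)
    (fun i hi => div_pos (hCr i hi) (hTr i hi)) (fun i hi => (hTr i hi).ne')
    (by rw [← hS 0]; exact_mod_cast hU)
    (fun h => hnot ⟨by exact_mod_cast (hS 0).trans h.1, Rat.cast_pos.1 (h.2.trans_eq hnum.symm)⟩)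
    (fun i j hi hij hj => by simp only [Tr, uxr, αr]; exact_mod_cast sorted i j hi hij hj)
  have hp := value_mem_relax hTr hkn hDk.ne hhead htail
  refine ⟨_, hp, fun q hq => hlower q hq k hkn hDk, k, hkn, ?_, (hf_cast k).symm,
    fun m hm hDm => ?_⟩
  · exact_mod_cast (hS k).symm ▸ sub_pos.2 hDk
  · have hDm' : tailUtil n Cr Tr m < 1 := by rw [← hS m]; exact_mod_cast sub_pos.1 hDm
    have hle : value n Cr Tr αr uxr β m ≤ value n Cr Tr αr uxr β k := hlower _ hp m hm hDm'
    rw [← hf_cast, ← hf_cast] at hle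
    exact_mod_cast hle

/-- Kernel setting, sorted so that `T_j·ux_j − α_j` is nonincreasing, and not
both `Σ U_j = 1` and `β + Σ U_j α_j > 0`: the feasible set of the relaxation
LP-relax(ux) is nonempty, the infimum of `t` over it is attained, and the
minimum equals `max {f(k) : f(k) well-defined}`. -/
theorem stmt_12 (n : ℕ) (hn : 1 ≤ n) (C T α ux : ℕ → ℤ) (β : ℤ)
    (hC : ∀ i ∈ Finset.Icc 1 n, 0 < C i)
    (hT : ∀ i ∈ Finset.Icc 1 n, 0 < T i)
    (hU : ∑ j ∈ Finset.Icc 1 n, (C j : ℚ) / (T j : ℚ) ≤ 1)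
    (sorted : ∀ i j : ℕ, 1 ≤ i → i ≤ j → j ≤ n →
      T j * ux j - α j ≤ T i * ux i - α i)
    (hnot : ¬ ((∑ j ∈ Finset.Icc 1 n, (C j : ℚ) / (T j : ℚ)) = 1 ∧
      (β : ℚ) + ∑ j ∈ Finset.Icc 1 n, (C j : ℚ) / (T j : ℚ) * (α j : ℚ) > 0))
    (f : ℕ → ℚ)
    (hf : ∀ m : ℕ, f m =
      ((β : ℚ) + ∑ j ∈ Finset.Icc (m + 1) n, (C j : ℚ) / (T j : ℚ) * (α j : ℚ) +
        ∑ j ∈ Finset.Icc 1 m, (C j : ℚ) * (ux j : ℚ)) /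
      (1 - ∑ j ∈ Finset.Icc (m + 1) n, (C j : ℚ) / (T j : ℚ)))
    (LP : Set (ℝ × (ℕ → ℝ)))
    (hLP : LP = {p : ℝ × (ℕ → ℝ) |
      p.1 - ∑ j ∈ Finset.Icc 1 n, (C j : ℝ) * p.2 j ≥ (β : ℝ) ∧
      (∀ i ∈ Finset.Icc 1 n, (T i : ℝ) * p.2 i - p.1 ≥ (α i : ℝ)) ∧
      (∀ i ∈ Finset.Icc 1 n, p.2 i ≥ (ux i : ℝ))}) :
    ∃ p ∈ LP, (∀ q ∈ LP, p.1 ≤ q.1) ∧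
      ∃ k : ℕ, k ≤ n ∧
        0 < 1 - ∑ j ∈ Finset.Icc (k + 1) n, (C j : ℚ) / (T j : ℚ) ∧
        p.1 = (f k : ℝ) ∧
        ∀ m : ℕ, m ≤ n →
          0 < 1 - ∑ j ∈ Finset.Icc (m + 1) n, (C j : ℚ) / (T j : ℚ) →
          f m ≤ f k :=
  stmt_12_general n C T α ux β hC hT hU sorted hnot f hf LP hLP
end

section
/- In the kernel setting with n ≥ 1 and ux ∈ ℤⁿ, suppose Σ_{j∈[n]} U_j = 1 and β + Σ_{j∈[n]} U_j·α_j ≤ 0. Then the supremum of (β + Σ_{j∈[n]} U_j·α_j)·v + (T_1·ux_1 − α_1)·z over the set {(v,z) ∈ ℝ² : v ≥ 0, z ≥ 0, z = 1, U_1·v − z ≥ 0} is attained at (v,z) = (1/U_1, 1) and equals f(1) = (β + Σ_{j∈[n]∖[1]} U_j·α_j + C_1·ux_1)/U_1. -/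
open Finset

/-- Once `z = 1`, the LP's feasible region is the ray `v ≥ 1 / U`, along which an objective
with nonpositive `v`-coefficient is maximal at its endpoint. -/
theorem isGreatest_lp_of_coeff_nonpos {U c d : ℝ} (hU : 0 < U) (hc : c ≤ 0) :
    IsGreatest {y : ℝ | ∃ v z : ℝ, 0 ≤ v ∧ 0 ≤ z ∧ z = 1 ∧ U * v - z ≥ 0 ∧ y = c * v + d * z}
      (c * (1 / U) + d * 1) := by
  refine ⟨⟨1 / U, 1, by positivity, zero_le_one, rfl, ?_, rfl⟩, ?_⟩
  · rw [mul_one_div_cancel hU.ne', sub_self]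
  · rintro y ⟨v, z, -, -, rfl, hv, rfl⟩
    have hv : 1 / U ≤ v := by rw [div_le_iff₀ hU]; linarith
    nlinarith

/-- Kernel setting with `Σ U_j = 1` and `β + Σ U_j α_j ≤ 0`: the supremum of
the knapsack subproblem LP for index `k = 1` is attained at
`(v, z) = (1/U₁, 1)` and equals `f(1)`. -/
theorem stmt_13 (n : ℕ) (hn : 1 ≤ n) (C T α ux : ℕ → ℤ) (β : ℤ)
    (hC : ∀ i ∈ Finset.Icc 1 n, 0 < C i)
    (hT : ∀ i ∈ Finset.Icc 1 n, 0 < T i)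
    (hU1 : ∑ j ∈ Finset.Icc 1 n, (C j : ℚ) / (T j : ℚ) = 1)
    (hβ : (β : ℚ) + ∑ j ∈ Finset.Icc 1 n, (C j : ℚ) / (T j : ℚ) * (α j : ℚ) ≤ 0)
    (f : ℕ → ℚ)
    (hf : ∀ m : ℕ, f m =
      ((β : ℚ) + ∑ j ∈ Finset.Icc (m + 1) n, (C j : ℚ) / (T j : ℚ) * (α j : ℚ) +
        ∑ j ∈ Finset.Icc 1 m, (C j : ℚ) * (ux j : ℚ)) /
      (1 - ∑ j ∈ Finset.Icc (m + 1) n, (C j : ℚ) / (T j : ℚ)))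
    (obj : ℝ → ℝ → ℝ)
    (hobj : ∀ v z : ℝ, obj v z =
      ((β : ℝ) + ∑ j ∈ Finset.Icc 1 n, (C j : ℝ) / (T j : ℝ) * (α j : ℝ)) * v +
      ((T 1 : ℝ) * (ux 1 : ℝ) - (α 1 : ℝ)) * z) :
    IsGreatest {y : ℝ | ∃ v z : ℝ, 0 ≤ v ∧ 0 ≤ z ∧ z = 1 ∧
        (C 1 : ℝ) / (T 1 : ℝ) * v - z ≥ 0 ∧ y = obj v z}
      (obj (1 / ((C 1 : ℝ) / (T 1 : ℝ))) 1) ∧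
    obj (1 / ((C 1 : ℝ) / (T 1 : ℝ))) 1 = (f 1 : ℝ) := by
  have h1 : 1 ∈ Icc 1 n := mem_Icc.mpr ⟨le_rfl, hn⟩
  have hC1 : (0 : ℝ) < C 1 := by exact_mod_cast hC 1 h1
  have hT1 : (0 : ℝ) < T 1 := by exact_mod_cast hT 1 h1
  have hsplit (g : ℕ → ℝ) : ∑ j ∈ Icc 1 n, g j = g 1 + ∑ j ∈ Ioc 1 n, g j :=
    (add_sum_Ioc_eq_sum_Icc hn).symm
  have hU1' : ∑ j ∈ Icc 1 n, (C j : ℝ) / (T j : ℝ) = 1 := by exact_mod_cast hU1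
  have hβ' : (β : ℝ) + ∑ j ∈ Icc 1 n, (C j : ℝ) / (T j : ℝ) * (α j : ℝ) ≤ 0 := by
    exact_mod_cast hβ
  simp only [hobj]
  refine ⟨isGreatest_lp_of_coeff_nonpos (div_pos hC1 hT1) hβ', ?_⟩
  rw [hf 1, Icc_add_one_left_eq_Ioc, Icc_self, sum_singleton]
  push_cast
  rw [hsplit] at hU1' ⊢
  rw [show 1 - ∑ j ∈ Ioc 1 n, (C j : ℝ) / (T j : ℝ) = C 1 / T 1 by linarith]
  field_simp
  ring
end

section
/- Let O, D, t₁, t₂ be integers and T a positive integer, and let η = |{k ∈ ℕ : t₁ ≤ O + k·T and O + k·T + D ≤ t₂}|. If t₁ ≤ O and O + D ≤ t₂, then η = ⌊(t₂ + T − D − O)/T⌋. -/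
/-! Every job released at or after `O` starts after `t₁`, so only the deadline constraint
`k * T ≤ t₂ - D - O` remains; the solutions `k` are `0, …, ⌊(t₂ - D - O) / T⌋`, one more than
that quotient, which is the floor of `(t₂ + T - D - O) / T`. -/

theorem Rat.floor_intCast_div_intCast_of_pos (m : ℤ) {n : ℤ} (hn : 0 < n) :
    ⌊(m : ℚ) / n⌋ = m / n := by
  lift n to ℕ using hn.le
  exact_mod_cast Rat.floor_intCast_div_natCast m n

theorem Set.setOf_natCast_mul_le_eq_Iio (M : ℤ) {T : ℤ} (hT : 0 < T) :
    {k : ℕ | (k : ℤ) * T ≤ M} = Set.Iio ((M + T) / T).toNat := by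
  ext k
  rw [Set.mem_ofPred_eq, Set.mem_Iio, Int.lt_toNat, ← Int.add_one_le_iff,
    Int.le_ediv_iff_mul_le hT]
  constructor <;> intro h <;> linarith

theorem Set.ncard_setOf_natCast_mul_le (M : ℤ) {T : ℤ} (hT : 0 < T) :
    {k : ℕ | (k : ℤ) * T ≤ M}.ncard = ((M + T) / T).toNat := by
  rw [Set.setOf_natCast_mul_le_eq_Iio M hT, Set.ncard_eq_toFinset_card', Set.toFinset_Iio,
    Nat.card_Iio]

/-- If `t₁ ≤ O` and `O + D ≤ t₂`, then the number of jobs with release time and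
deadline inside `[t₁, t₂]` equals `⌊(t₂ + T − D − O)/T⌋`. -/
theorem stmt_17 (O D t₁ t₂ T : ℤ) (hT : 0 < T)
    (η : ℕ)
    (hη : η = {k : ℕ | t₁ ≤ O + (k : ℤ) * T ∧ O + (k : ℤ) * T + D ≤ t₂}.ncard)
    (h1 : t₁ ≤ O) (h2 : O + D ≤ t₂) :
    (η : ℤ) = ⌊((t₂ : ℚ) + (T : ℚ) - (D : ℚ) - (O : ℚ)) / (T : ℚ)⌋ := by
  have hjobs : {k : ℕ | t₁ ≤ O + (k : ℤ) * T ∧ O + (k : ℤ) * T + D ≤ t₂}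
      = {k : ℕ | (k : ℤ) * T ≤ t₂ - D - O} := by
    ext k
    have : 0 ≤ (k : ℤ) * T := by positivity
    simp only [Set.mem_ofPred_eq]
    constructor
    · rintro ⟨-, h⟩; linarith
    · intro h; constructor <;> linarith
  have hfloor : ⌊((t₂ : ℚ) + T - D - O) / T⌋ = (t₂ - D - O + T) / T := by
    rw [← Rat.floor_intCast_div_intCast_of_pos _ hT]
    push_cast
    ring_nf
  have hquot : 0 ≤ (t₂ - D - O + T) / T := Int.ediv_nonneg (by linarith) hT.le
  rw [hfloor, hη, hjobs, Set.ncard_setOf_natCast_mul_le _ hT, Int.toNat_of_nonneg hquot]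
end

section
/- Let O, D, t₁, t₂ be integers and T a positive integer, and let η = |{k ∈ ℕ : t₁ ≤ O + k·T and O + k·T + D ≤ t₂}|. If O < t₁ and t₂ − t₁ ≥ D, then η = ⌊(t₂ + T − D − O)/T⌋ − ⌈(t₁ − O)/T⌉. -/
/-!
Release times `O + kT ≥ t₁` are exactly the `k ≥ ⌈(t₁ - O)/T⌉`, and deadlines `O + kT + D ≤ t₂`
exactly the `k < ⌊(t₂ + T - D - O)/T⌋`, so the jobs form an integer interval `[a, b)`.
`O < t₁` puts `a` in `ℕ`, and `t₂ - t₁ ≥ D` gives `a ≤ b`, so the count is `b - a`.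
-/

section
variable {K : Type*} [Field K] [LinearOrder K] [IsStrictOrderedRing K] [FloorRing K]

theorem Int.ceil_intCast_div_le_iff {a b k : ℤ} (hb : 0 < b) :
    ⌈(a : K) / b⌉ ≤ k ↔ a ≤ k * b := by
  rw [Int.ceil_le, div_le_iff₀ (by exact_mod_cast hb)]
  exact_mod_cast Iff.rfl

theorem Int.le_floor_intCast_div_iff {a b k : ℤ} (hb : 0 < b) :
    k ≤ ⌊(a : K) / b⌋ ↔ k * b ≤ a := by
  rw [Int.le_floor, le_div_iff₀ (by exact_mod_cast hb)]
  exact_mod_cast Iff.rfl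

end

theorem Set.ncard_natCast_mem_Ico {a b : ℤ} (ha : 0 ≤ a) (hab : a ≤ b) :
    ({k : ℕ | a ≤ k ∧ (k : ℤ) < b}.ncard : ℤ) = b - a := by
  have hIco : {k : ℕ | a ≤ k ∧ (k : ℤ) < b} = ↑(Finset.Ico a.toNat b.toNat) := by
    ext k
    simp only [Set.mem_ofPred_eq, Finset.coe_Ico, Set.mem_Ico]
    omega
  rw [hIco, Set.ncard_coe_finset, Nat.card_Ico]
  omega

/-- If `O < t₁` and `t₂ − t₁ ≥ D`, then the number of jobs with release time
and deadline inside `[t₁, t₂]` equals `⌊(t₂ + T − D − O)/T⌋ − ⌈(t₁ − O)/T⌉`. -/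
theorem stmt_18 (O D t₁ t₂ T : ℤ) (hT : 0 < T)
    (η : ℕ)
    (hη : η = {k : ℕ | t₁ ≤ O + (k : ℤ) * T ∧ O + (k : ℤ) * T + D ≤ t₂}.ncard)
    (h1 : O < t₁) (h2 : t₂ - t₁ ≥ D) :
    (η : ℤ) = ⌊((t₂ : ℚ) + (T : ℚ) - (D : ℚ) - (O : ℚ)) / (T : ℚ)⌋ -
      ⌈((t₁ : ℚ) - (O : ℚ)) / (T : ℚ)⌉ := by
  set a := ⌈((t₁ - O : ℤ) : ℚ) / T⌉ with ha
  set b := ⌊((t₂ + T - D - O : ℤ) : ℚ) / T⌋ with hb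
  have release_iff (k : ℤ) : a ≤ k ↔ t₁ ≤ O + k * T := by
    rw [Int.ceil_intCast_div_le_iff hT]
    omega
  have deadline_iff (k : ℤ) : k < b ↔ O + k * T + D ≤ t₂ := by
    rw [Int.lt_iff_add_one_le, Int.le_floor_intCast_div_iff hT, add_one_mul]
    omega
  have ha_pos : 0 < a := not_le.1 fun h ↦ by linarith [(release_iff 0).1 h]
  -- `a - 1` misses the release window, so its deadline falls before `t₁ + D ≤ t₂`.
  have hab : a ≤ b := by
    have := mt (release_iff (a - 1)).2 (by omega)
    linarith [(deadline_iff (a - 1)).2 (by linarith)]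
  push_cast at ha hb
  rw [← ha, ← hb, hη, ← Set.ncard_natCast_mem_Ico ha_pos.le hab]
  simp only [release_iff, deadline_iff]
end
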